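/- arXiv:1107.4794 — 6 statements merged into one kernel-verified Lean document; each statement's English description precedes it below -/
import Mathlib

section
/- Let M be a countable metric space. If every Katětov function of M has a realization in M, then M is homogeneous. If every restricted type function of M has a realization in M, then M is universal. -/
/-- The set of distances realized in a metric space. -/
def distSet (X : Type*) [MetricSpace X] : Set ℝ :=
  {r : ℝ | ∃ x y : X, dist x y = r}

/-- A metric space is homogeneous if every isometry from a finite subset into the
space extends to a bijective self-isometry. -/
def IsHomogeneous (X : Type*) [MetricSpace X] : Prop :=
  ∀ F : Set X, F.Finite →
    ∀ f : F → X, (∀ x y : F, dist (f x) (f y) = dist (x : X) (y : X)) →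
      ∃ g : X ≃ᵢ X, ∀ x : F, g (x : X) = f x

/-- A metric space is universal if it is homogeneous and embeds isometrically every
finite metric space whose distances lie in its distance set. -/
def IsUniversal (X : Type*) [MetricSpace X] : Prop :=
  IsHomogeneous X ∧
    ∀ (F : Type) [MetricSpace F] [Finite F], distSet F ⊆ distSet X →
      ∃ f : F → X, ∀ a b : F, dist (f a) (f b) = dist a b

/-- An Urysohn metric space: homogeneous, separable, complete, and embedding every
separable metric space whose distances lie in its distance set. -/
def IsUrysohn (X : Type*) [MetricSpace X] : Prop :=
  IsHomogeneous X ∧ TopologicalSpace.SeparableSpace X ∧ CompleteSpace X ∧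
    ∀ (N : Type) [MetricSpace N] [TopologicalSpace.SeparableSpace N],
      distSet N ⊆ distSet X →
        ∃ f : N → X, ∀ a b : N, dist (f a) (f b) = dist a b

/-- The triple `(a, b, c)` of nonnegative reals is metric: `|a - b| ≤ c ≤ a + b`. -/
def MetricTriple (a b c : ℝ) : Prop := |a - b| ≤ c ∧ c ≤ a + b

/-- `x ⤳ (a, b, c, d)`: the triples `(x,a,b)` and `(x,c,d)` are metric and
`a ≥ max {b, c, d}`. -/
def Leads (x a b c d : ℝ) : Prop :=
  MetricTriple x a b ∧ MetricTriple x c d ∧ b ≤ a ∧ c ≤ a ∧ d ≤ a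

/-- The 4-values condition. -/
def FourValues (R : Set ℝ) : Prop :=
  ∀ a b c d, a ∈ R → b ∈ R → c ∈ R → d ∈ R →
    (∃ x ∈ R, Leads x a b c d) → ∃ y ∈ R, Leads y a d c b

/-- `0` is a limit point of `R ⊆ [0, ∞)`. -/
def ZeroLimit (R : Set ℝ) : Prop := ∀ ε > 0, ∃ r ∈ R, 0 < r ∧ r < ε

/-- `d` is a metric on the type `α`. -/
def IsMetricOn {α : Type*} (d : α → α → ℝ) : Prop :=
  (∀ x, d x x = 0) ∧ (∀ x y, d x y = d y x) ∧
    (∀ x y z, d x z ≤ d x y + d y z) ∧ ∀ x y, d x y = 0 → x = y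

/-- A restricted type function of the metric space `X`: a positive real valued function on a
finite subset of `X`, compatible with the metric, with values in the distance set of `X`. -/
def IsRestrictedType (X : Type*) [MetricSpace X] (F : Set X) (t : F → ℝ) : Prop :=
  F.Finite ∧ (∀ x, 0 < t x) ∧
    (∀ x y : F, |t x - t y| ≤ dist (x : X) (y : X) ∧ dist (x : X) (y : X) ≤ t x + t y) ∧
    ∀ x, t x ∈ distSet X

/-- A Katětov function of the metric space `X`: a positive real valued function on a finite
subset of `X` whose one-point extension `Sp(k)` is isometric to a subspace of `X`. -/
def IsKatetov (X : Type*) [MetricSpace X] (F : Set X) (k : F → ℝ) : Prop :=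
  F.Finite ∧ (∀ x, 0 < k x) ∧
    ∃ (g : F → X) (p : X),
      (∀ x y : F, dist (g x) (g y) = dist (x : X) (y : X)) ∧ ∀ x : F, dist p (g x) = k x

/-- `p` realizes the type function `t` in `X`. -/
def Realizes {X : Type*} [MetricSpace X] (F : Set X) (t : F → ℝ) (p : X) : Prop :=
  ∀ x : F, dist p (x : X) = t x

section BackAndForth

variable {M : Type} [MetricSpace M]

/-- The graph of a partial isometry. -/
def IsoGraph (s : Set (M × M)) : Prop :=
  ∀ p ∈ s, ∀ q ∈ s, dist p.1 q.1 = dist p.2 q.2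

lemma isoGraph_swap {s : Set (M × M)} (h : IsoGraph s) : IsoGraph (Prod.swap '' s) := by
  rintro _ ⟨p, hp, rfl⟩ _ ⟨q, hq, rfl⟩
  simpa [dist_comm] using (h p hp q hq).symm

lemma forward_extend
    (hK : ∀ (F : Set M) (k : F → ℝ), IsKatetov M F k → ∃ p : M, Realizes F k p)
    {s : Set (M × M)} (hfin : s.Finite) (hiso : IsoGraph s) (x : M) :
    ∃ y, IsoGraph (insert (x, y) s) := by
  classical
  by_cases hx : ∃ b, (x, b) ∈ s
  · obtain ⟨b, hb⟩ := hx
    refine ⟨b, ?_⟩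
    rintro p (rfl | hp) q (rfl | hq)
    · simp
    · exact hiso _ hb _ hq
    · exact hiso _ hp _ hb
    · exact hiso _ hp _ hq
  · set F : Set M := Prod.snd '' s with hF
    have wit : ∀ b : F, ∃ p, p ∈ s ∧ p.2 = (b : M) := fun b => by
      obtain ⟨p, hp, he⟩ := b.2; exact ⟨p, hp, he⟩
    set w : F → M × M := fun b => (wit b).choose with hwdef
    have hw1 : ∀ b : F, w b ∈ s := fun b => (wit b).choose_spec.1
    have hw2 : ∀ b : F, (w b).2 = (b : M) := fun b => (wit b).choose_spec.2
    set k : F → ℝ := fun b => dist x (w b).1 with hk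
    have hKat : IsKatetov M F k := by
      refine ⟨hfin.image _, ?_, fun b => (w b).1, x, ?_, fun b => rfl⟩
      · intro b
        refine dist_pos.2 fun he => hx ⟨(w b).2, ?_⟩
        rw [he, Prod.mk.eta]
        exact hw1 b
      · intro a b
        have h := hiso _ (hw1 a) _ (hw1 b)
        rwa [hw2, hw2] at h
    obtain ⟨y, hy⟩ := hK F k hKat
    have key : ∀ p ∈ s, dist x p.1 = dist y p.2 := by
      intro p hp
      have hmem : p.2 ∈ F := ⟨p, hp, rfl⟩
      have h1 : dist y p.2 = k ⟨p.2, hmem⟩ := hy ⟨p.2, hmem⟩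
      have h2 : (w ⟨p.2, hmem⟩).1 = p.1 := by
        have h3 := hiso _ (hw1 ⟨p.2, hmem⟩) _ hp
        rw [hw2 ⟨p.2, hmem⟩] at h3
        simp only [dist_self] at h3
        exact dist_eq_zero.1 h3
      rw [h1, hk]
      simp only [← h2]
    refine ⟨y, ?_⟩
    rintro p (rfl | hp) q (rfl | hq)
    · simp
    · exact key _ hq
    · simpa [dist_comm] using key _ hp
    · exact hiso _ hp _ hq

lemma backward_extend
    (hK : ∀ (F : Set M) (k : F → ℝ), IsKatetov M F k → ∃ p : M, Realizes F k p)
    {s : Set (M × M)} (hfin : s.Finite) (hiso : IsoGraph s) (x : M) :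
    ∃ y, IsoGraph (insert (y, x) s) := by
  obtain ⟨y, hy⟩ := forward_extend hK (hfin.image Prod.swap) (isoGraph_swap hiso) x
  refine ⟨y, ?_⟩
  have h : insert (y, x) s = Prod.swap '' insert (x, y) (Prod.swap '' s) := by
    rw [Set.image_insert_eq]
    simp [Set.image_image, Prod.swap_swap]
  rw [h]
  exact isoGraph_swap hy

lemma both_extend
    (hK : ∀ (F : Set M) (k : F → ℝ), IsKatetov M F k → ∃ p : M, Realizes F k p)
    {s : Set (M × M)} (hfin : s.Finite) (hiso : IsoGraph s) (x : M) :
    ∃ s' : Set (M × M), s ⊆ s' ∧ s'.Finite ∧ IsoGraph s' ∧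
      (∃ b, (x, b) ∈ s') ∧ ∃ a, (a, x) ∈ s' := by
  obtain ⟨y, hy⟩ := forward_extend hK hfin hiso x
  obtain ⟨z, hz⟩ := backward_extend hK (hfin.insert _) hy x
  refine ⟨insert (z, x) (insert (x, y) s),
    fun p hp => Set.mem_insert_of_mem _ (Set.mem_insert_of_mem _ hp),
    (hfin.insert _).insert _, hz,
    ⟨y, Set.mem_insert_of_mem _ (Set.mem_insert _ _)⟩,
    ⟨z, Set.mem_insert _ _⟩⟩

end BackAndForth

section Embed

variable {M : Type} [MetricSpace M]

lemma embed_finset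
    (hT : ∀ (F : Set M) (t : F → ℝ), IsRestrictedType M F t → ∃ p : M, Realizes F t p)
    (F : Type) [MetricSpace F] (hsub : distSet F ⊆ distSet M) (A : Finset F) :
    ∃ g : A → M, ∀ a b : A, dist (g a) (g b) = dist (a : F) (b : F) := by
  classical
  induction A using Finset.induction_on with
  | empty =>
    refine ⟨fun a => absurd a.2 (Finset.notMem_empty _),
      fun a => absurd a.2 (Finset.notMem_empty _)⟩
  | @insert a A ha ih =>
    obtain ⟨g, hg⟩ := ih
    have ginj : Function.Injective g := by
      intro b c h
      have h2 := hg b c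
      rw [h, dist_self] at h2
      exact Subtype.ext (dist_eq_zero.1 h2.symm)
    set S : Set M := Set.range g with hS
    have wit : ∀ s : S, ∃ b : A, g b = (s : M) := fun s => s.2
    set w : S → A := fun s => (wit s).choose with hwdef
    have hw : ∀ s : S, g (w s) = (s : M) := fun s => (wit s).choose_spec
    set t : S → ℝ := fun s => dist (a : F) ((w s : A) : F) with ht
    have hRT : IsRestrictedType M S t := by
      refine ⟨Set.finite_range g, ?_, ?_, fun s => hsub ⟨a, _, rfl⟩⟩
      · intro s
        refine dist_pos.2 fun he => ha ?_
        rw [he]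
        exact (w s).2
      · intro s s'
        have hd : dist (s : M) (s' : M) = dist ((w s : A) : F) ((w s' : A) : F) := by
          rw [← hw s, ← hw s']
          exact hg _ _
        constructor
        · rw [hd, ht]
          have h := abs_dist_sub_le ((w s : A) : F) ((w s' : A) : F) (a : F)
          simpa [dist_comm] using h
        · rw [hd, ht]
          calc dist ((w s : A) : F) ((w s' : A) : F)
              ≤ dist ((w s : A) : F) a + dist a ((w s' : A) : F) := dist_triangle _ _ _
            _ = dist a ((w s : A) : F) + dist a ((w s' : A) : F) := by rw [dist_comm]
    obtain ⟨p, hp⟩ := hT S t hRT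
    refine ⟨fun x => if h : (x : F) ∈ A then g ⟨x, h⟩ else p, ?_⟩
    have hcase : ∀ x : (insert a A : Finset F), (x : F) ∉ A → (x : F) = a := by
      intro x hx
      rcases Finset.mem_insert.1 x.2 with h | h
      · exact h
      · exact absurd h hx
    have hpg : ∀ b : A, dist p (g b) = dist a (b : F) := by
      intro b
      have hmem : g b ∈ S := Set.mem_range_self b
      have h1 : dist p (g b) = t ⟨g b, hmem⟩ := hp ⟨g b, hmem⟩
      have h2 : w ⟨g b, hmem⟩ = b := ginj (hw ⟨g b, hmem⟩)
      rw [h1]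
      calc t ⟨g b, hmem⟩ = dist (a : F) ((w ⟨g b, hmem⟩ : A) : F) := by simp only [ht]
        _ = dist (a : F) (b : F) := by rw [h2]
    intro x y
    dsimp only
    by_cases hx : (x : F) ∈ A <;> by_cases hy : (y : F) ∈ A
    · rw [dif_pos hx, dif_pos hy]; exact hg _ _
    · rw [dif_pos hx, dif_neg hy, hcase y hy, dist_comm, dist_comm (x:F) a]
      exact hpg ⟨x, hx⟩
    · rw [dif_neg hx, dif_pos hy, hcase x hx]
      exact hpg ⟨y, hy⟩
    · rw [dif_neg hx, dif_neg hy, hcase x hx, hcase y hy]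
      simp

lemma katetov_isRestricted {F : Set M} {k : F → ℝ} (h : IsKatetov M F k) :
    IsRestrictedType M F k := by
  obtain ⟨hfin, hpos, g, p, hg, hk⟩ := h
  refine ⟨hfin, hpos, ?_, fun x => ⟨p, g x, hk x⟩⟩
  intro x y
  constructor
  · rw [← hk x, ← hk y, ← hg x y]
    simpa [dist_comm] using abs_dist_sub_le (g x) (g y) p
  · rw [← hk x, ← hk y, ← hg x y, dist_comm p (g x)]
    exact dist_triangle _ _ _

end Embed

lemma homog_of_katetov {M : Type} [MetricSpace M] [Countable M]
    (hK : ∀ (F : Set M) (k : F → ℝ), IsKatetov M F k → ∃ p : M, Realizes F k p) :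
    IsHomogeneous M := by
  classical
  intro F hFfin f hf
  rcases isEmpty_or_nonempty M with hM | hM
  · exact ⟨IsometryEquiv.refl M, fun x => isEmptyElim (x : M)⟩
  obtain ⟨e, he⟩ := exists_surjective_nat M
  -- the extension step, packaged with choice
  choose step hsub hfin hiso hdom hran using
    fun (s : {s : Set (M × M) // s.Finite ∧ IsoGraph s}) (x : M) =>
      both_extend hK s.2.1 s.2.2 x
  -- initial graph
  have hFsub : Finite F := hFfin.to_subtype
  set G0 : Set (M × M) := Set.range (fun x : F => ((x : M), f x)) with hG0
  have hG0fin : G0.Finite := Set.finite_range _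
  have hG0iso : IsoGraph G0 := by
    rintro _ ⟨x, rfl⟩ _ ⟨y, rfl⟩
    exact (hf x y).symm
  -- the chain
  set S : ℕ → {s : Set (M × M) // s.Finite ∧ IsoGraph s} :=
    fun n => Nat.rec ⟨G0, hG0fin, hG0iso⟩
      (fun n prev => ⟨step prev (e n), hfin prev (e n), hiso prev (e n)⟩) n with hSdef
  have hSsucc : ∀ n, (S (n + 1)).1 = step (S n) (e n) := fun n => rfl
  have hmono : Monotone (fun n => (S n).1) := by
    refine monotone_nat_of_le_succ fun n => ?_
    rw [hSsucc n]
    exact hsub (S n) (e n)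
  set U : Set (M × M) := ⋃ n, (S n).1 with hU
  have hUiso : IsoGraph U := by
    rintro p hp q hq
    obtain ⟨m, hm⟩ := Set.mem_iUnion.1 hp
    obtain ⟨n, hn⟩ := Set.mem_iUnion.1 hq
    exact (S (max m n)).2.2 p (hmono (le_max_left m n) hm) q (hmono (le_max_right m n) hn)
  have hUdom : ∀ x : M, ∃ y, (x, y) ∈ U := by
    intro x
    obtain ⟨n, rfl⟩ := he x
    obtain ⟨y, hy⟩ := hdom (S n) (e n)
    exact ⟨y, Set.mem_iUnion.2 ⟨n + 1, by rw [hSsucc n]; exact hy⟩⟩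
  have hUran : ∀ y : M, ∃ x, (x, y) ∈ U := by
    intro y
    obtain ⟨n, rfl⟩ := he y
    obtain ⟨x, hx⟩ := hran (S n) (e n)
    exact ⟨x, Set.mem_iUnion.2 ⟨n + 1, by rw [hSsucc n]; exact hx⟩⟩
  have hfun : ∀ {x y y'}, (x, y) ∈ U → (x, y') ∈ U → y = y' := by
    intro x y y' h1 h2
    have := hUiso _ h1 _ h2
    simp only [dist_self] at this
    exact dist_eq_zero.1 this.symm
  have hinj : ∀ {x x' y}, (x, y) ∈ U → (x', y) ∈ U → x = x' := by
    intro x x' y h1 h2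
    have := hUiso _ h1 _ h2
    simp only [dist_self] at this
    exact dist_eq_zero.1 this
  choose g hg using hUdom
  choose gi hgi using hUran
  have hli : Function.LeftInverse gi g := fun x => hinj (hgi (g x)) (hg x)
  have hri : Function.RightInverse gi g := fun y => hfun (hg (gi y)) (hgi y)
  have giso : ∀ x x' : M, dist (g x) (g x') = dist x x' :=
    fun x x' => (hUiso _ (hg x) _ (hg x')).symm
  refine ⟨⟨⟨g, gi, hli, hri⟩, Isometry.of_dist_eq giso⟩, ?_⟩
  intro x
  have hx0 : ((x : M), f x) ∈ U :=
    Set.mem_iUnion.2 ⟨0, Set.mem_range_self x⟩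
  exact hfun (hg (x : M)) hx0


/-- A countable metric space realizing all of its Katětov functions is
homogeneous; a countable metric space realizing all of its restricted type functions is
universal. -/
theorem statement14 (M : Type) [MetricSpace M] [Countable M] :
    ((∀ (F : Set M) (k : F → ℝ), IsKatetov M F k → ∃ p : M, Realizes F k p) →
      IsHomogeneous M) ∧
    ((∀ (F : Set M) (t : F → ℝ), IsRestrictedType M F t → ∃ p : M, Realizes F t p) →
      IsUniversal M) := by
  constructor
  · exact homog_of_katetov
  · intro hT
    have hK : ∀ (F : Set M) (k : F → ℝ), IsKatetov M F k → ∃ p : M, Realizes F k p :=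
      fun F k h => hT F k (katetov_isRestricted h)
    refine ⟨homog_of_katetov hK, ?_⟩
    intro F _ _ hsub
    obtain ⟨inst⟩ := nonempty_fintype F
    obtain ⟨g, hg⟩ := embed_finset hT F hsub (@Finset.univ F inst)
    exact ⟨fun x => g ⟨x, Finset.mem_univ x⟩, fun a b => hg _ _⟩
end

section
/- Let M be a complete and separable metric space. If every Katětov function of M has a realization in M, then M is homogeneous. If every restricted type function of M has a realization in M, then M is an Urysohn metric space. -/
noncomputable def seqAux {α : Type*} [Nonempty α] (P : ℕ → (ℕ → α) → Prop)
    (hP : ∀ n (p q : ℕ → α), (∀ i ≤ n, p i = q i) → P n p → P n q)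
    (step : ∀ n (p : ℕ → α), (∀ i < n, P i p) → ∃ x, P n (Function.update p n x)) :
    (n : ℕ) → {p : ℕ → α // ∀ i < n, P i p} :=
  Nat.rec ⟨fun _ => Classical.arbitrary α, fun i h => absurd h (Nat.not_lt_zero i)⟩
    (fun n prev =>
      ⟨Function.update prev.1 n ((step n prev.1 prev.2).choose),
       fun i hi => by
         have hspec := (step n prev.1 prev.2).choose_spec
         rcases Nat.lt_succ_iff_lt_or_eq.mp hi with h | h
         · refine hP i prev.1 _ (fun j hj => ?_) (prev.2 i h)
           rw [Function.update_of_ne (by omega)]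
         · subst h; exact hspec⟩)

lemma seqAux_agree {α : Type*} [Nonempty α] (P : ℕ → (ℕ → α) → Prop)
    (hP : ∀ n (p q : ℕ → α), (∀ i ≤ n, p i = q i) → P n p → P n q)
    (step : ∀ n (p : ℕ → α), (∀ i < n, P i p) → ∃ x, P n (Function.update p n x)) :
    ∀ n i, i < n → (seqAux P hP step (n+1)).1 i = (seqAux P hP step n).1 i := by
  intro n i hi
  exact Function.update_of_ne (by omega) _ _

lemma seqAux_agree' {α : Type*} [Nonempty α] (P : ℕ → (ℕ → α) → Prop)
    (hP : ∀ n (p q : ℕ → α), (∀ i ≤ n, p i = q i) → P n p → P n q)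
    (step : ∀ n (p : ℕ → α), (∀ i < n, P i p) → ∃ x, P n (Function.update p n x)) :
    ∀ n m i, i < n → n ≤ m → (seqAux P hP step m).1 i = (seqAux P hP step n).1 i := by
  intro n m
  induction m with
  | zero => intro i hi hm; omega
  | succ m ih =>
    intro i hi hm
    rcases Nat.lt_succ_iff_lt_or_eq.mp (Nat.lt_succ_of_le hm) with h | h
    · rw [seqAux_agree P hP step m i (by omega), ih i hi (by omega)]
    · subst h; rfl

lemma exists_seq_rec {α : Type*} [Nonempty α] (P : ℕ → (ℕ → α) → Prop)
    (hP : ∀ n (p q : ℕ → α), (∀ i ≤ n, p i = q i) → P n p → P n q)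
    (step : ∀ n (p : ℕ → α), (∀ i < n, P i p) → ∃ x, P n (Function.update p n x)) :
    ∃ f : ℕ → α, ∀ n, P n f := by
  refine ⟨fun n => (seqAux P hP step (n+1)).1 n, fun n => ?_⟩
  refine hP n (seqAux P hP step (n+1)).1 _ (fun i hi => ?_)
    ((seqAux P hP step (n+1)).2 n (Nat.lt_succ_self n))
  exact seqAux_agree' P hP step (i+1) (n+1) i (Nat.lt_succ_self i) (by omega)

/-- An isometric assignment on a dense sequence extends to the whole space. -/
lemma isometry_extend {X Y : Type*} [MetricSpace X] [MetricSpace Y] [CompleteSpace Y]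
    (u : ℕ → X) (hu : DenseRange u) (b : ℕ → Y)
    (hb : ∀ i j, dist (b i) (b j) = dist (u i) (u j)) :
    ∃ f : X → Y, (∀ i, f (u i) = b i) ∧ ∀ x y, dist (f x) (f y) = dist x y := by
  classical
  have hdense := Metric.denseRange_iff.mp hu
  -- for each x and j, pick an index close to x
  have hsel : ∀ x : X, ∀ j : ℕ, ∃ i, dist x (u i) < (1/2)^j := fun x j =>
    hdense x _ (by positivity)
  choose s hs using hsel
  -- the approximating sequence tends to x
  have htendX : ∀ x : X, Filter.Tendsto (fun j => u (s x j)) Filter.atTop (nhds x) := by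
    intro x
    rw [tendsto_iff_dist_tendsto_zero]
    refine squeeze_zero (fun j => dist_nonneg) (fun j => (dist_comm _ x ▸ (hs x j).le)) ?_
    exact tendsto_pow_atTop_nhds_zero_of_lt_one (by norm_num) (by norm_num)
  -- the image sequence is Cauchy
  have hcauchy : ∀ x : X, CauchySeq (fun j => b (s x j)) := by
    intro x
    have : CauchySeq (fun j => u (s x j)) := (htendX x).cauchySeq
    rw [Metric.cauchySeq_iff] at this ⊢
    intro ε hε
    obtain ⟨N, hN⟩ := this ε hε
    exact ⟨N, fun m hm n hn => by rw [hb]; exact hN m hm n hn⟩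
  have hlim : ∀ x : X, ∃ y : Y, Filter.Tendsto (fun j => b (s x j)) Filter.atTop (nhds y) :=
    fun x => cauchySeq_tendsto_of_complete (hcauchy x)
  choose f hf using hlim
  have hd : ∀ x y, dist (f x) (f y) = dist x y := by
    intro x y
    have h1 : Filter.Tendsto (fun j => dist (b (s x j)) (b (s y j))) Filter.atTop
        (nhds (dist (f x) (f y))) := (hf x).dist (hf y)
    have h2 : Filter.Tendsto (fun j => dist (u (s x j)) (u (s y j))) Filter.atTop
        (nhds (dist x y)) := (htendX x).dist (htendX y)
    have : (fun j => dist (b (s x j)) (b (s y j))) = fun j => dist (u (s x j)) (u (s y j)) := by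
      funext j; exact hb _ _
    rw [this] at h1
    exact tendsto_nhds_unique h1 h2
  refine ⟨f, fun i => ?_, hd⟩
  have h1 : Filter.Tendsto (fun j => dist (b (s (u i) j)) (b i)) Filter.atTop
      (nhds (dist (f (u i)) (b i))) := (hf (u i)).dist tendsto_const_nhds
  have h2 : Filter.Tendsto (fun j => dist (u (s (u i) j)) (u i)) Filter.atTop (nhds 0) := by
    have := (htendX (u i)).dist (tendsto_const_nhds (x := u i))
    simpa using this
  have : (fun j => dist (b (s (u i) j)) (b i)) = fun j => dist (u (s (u i) j)) (u i) := by
    funext j; exact hb _ _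
  rw [this] at h1
  have := tendsto_nhds_unique h1 h2
  exact eq_of_dist_eq_zero this

lemma ext_katetov {M : Type*} [MetricSpace M]
    (hK : ∀ (F : Set M) (k : F → ℝ), IsKatetov M F k → ∃ p : M, Realizes F k p)
    (n : ℕ) (a b : ℕ → M)
    (hab : ∀ i j, i < n → j < n → dist (b i) (b j) = dist (a i) (a j)) (x : M) :
    ∃ y : M, ∀ i < n, dist y (b i) = dist x (a i) := by
  classical
  by_cases hx : ∃ i, i < n ∧ x = a i
  · obtain ⟨i, hi, rfl⟩ := hx
    exact ⟨b i, fun j hj => hab i j hi hj⟩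
  push_neg at hx
  set F : Set M := b '' Set.Iio n with hF
  have hmem : ∀ z : F, ∃ i, i < n ∧ b i = (z : M) := by
    rintro ⟨z, i, hi, rfl⟩
    exact ⟨i, hi, rfl⟩
  choose idx hidx hbidx using hmem
  set k : F → ℝ := fun z => dist x (a (idx z)) with hk
  have hkat : IsKatetov M F k := by
    refine ⟨(Set.finite_Iio n).image b, fun z => dist_pos.mpr (hx _ (hidx z)), ?_⟩
    refine ⟨fun z => a (idx z), x, fun z w => ?_, fun z => rfl⟩
    rw [← hab _ _ (hidx z) (hidx w), hbidx z, hbidx w]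
  obtain ⟨p, hp⟩ := hK F k hkat
  refine ⟨p, fun i hi => ?_⟩
  have hiF : b i ∈ F := ⟨i, hi, rfl⟩
  have haeq : a (idx ⟨b i, hiF⟩) = a i := by
    have h0 : dist (b (idx ⟨b i, hiF⟩)) (b i) = 0 := by
      rw [hbidx ⟨b i, hiF⟩]; exact dist_self _
    rw [hab _ _ (hidx ⟨b i, hiF⟩) hi] at h0
    exact eq_of_dist_eq_zero h0
  have := hp ⟨b i, hiF⟩
  simpa [hk, haeq] using this

lemma ext_type {M N : Type*} [MetricSpace M] [MetricSpace N] [Nonempty M]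
    (hT : ∀ (F : Set M) (t : F → ℝ), IsRestrictedType M F t → ∃ p : M, Realizes F t p)
    (hsub : distSet N ⊆ distSet M)
    (n : ℕ) (a : ℕ → N) (b : ℕ → M)
    (hab : ∀ i j, i < n → j < n → dist (b i) (b j) = dist (a i) (a j)) (x : N) :
    ∃ y : M, ∀ i < n, dist y (b i) = dist x (a i) := by
  classical
  by_cases hx : ∃ i, i < n ∧ x = a i
  · obtain ⟨i, hi, rfl⟩ := hx
    exact ⟨b i, fun j hj => hab i j hi hj⟩
  push_neg at hx
  set F : Set M := b '' Set.Iio n with hF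
  have hmem : ∀ z : F, ∃ i, i < n ∧ b i = (z : M) := by
    rintro ⟨z, i, hi, rfl⟩
    exact ⟨i, hi, rfl⟩
  choose idx hidx hbidx using hmem
  set t : F → ℝ := fun z => dist x (a (idx z)) with ht
  have htyp : IsRestrictedType M F t := by
    refine ⟨(Set.finite_Iio n).image b, fun z => dist_pos.mpr (hx _ (hidx z)),
      fun z w => ?_, fun z => hsub ⟨x, a (idx z), rfl⟩⟩
    have hzw : dist (z : M) (w : M) = dist (a (idx z)) (a (idx w)) := by
      rw [← hbidx z, ← hbidx w, hab _ _ (hidx z) (hidx w)]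
    constructor
    · rw [hzw]
      have h := abs_dist_sub_le (a (idx z)) (a (idx w)) x
      simpa [dist_comm] using h
    · rw [hzw]
      calc dist (a (idx z)) (a (idx w)) ≤ dist (a (idx z)) x + dist x (a (idx w)) :=
            dist_triangle _ _ _
        _ = t z + t w := by rw [dist_comm]
  obtain ⟨p, hp⟩ := hT F t htyp
  refine ⟨p, fun i hi => ?_⟩
  have hiF : b i ∈ F := ⟨i, hi, rfl⟩
  have haeq : a (idx ⟨b i, hiF⟩) = a i := by
    have h0 : dist (b (idx ⟨b i, hiF⟩)) (b i) = 0 := by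
      rw [hbidx ⟨b i, hiF⟩]; exact dist_self _
    rw [hab _ _ (hidx ⟨b i, hiF⟩) hi] at h0
    exact eq_of_dist_eq_zero h0
  have := hp ⟨b i, hiF⟩
  simpa [ht, haeq] using this

theorem homog_of_ope {M : Type*} [MetricSpace M] [CompleteSpace M]
    [TopologicalSpace.SeparableSpace M]
    (ope : ∀ (n : ℕ) (a b : ℕ → M),
      (∀ i j, i < n → j < n → dist (b i) (b j) = dist (a i) (a j)) →
      ∀ x : M, ∃ y : M, ∀ i < n, dist y (b i) = dist x (a i)) :
    IsHomogeneous M := by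
  classical
  by_cases hM : Nonempty M
  swap
  · rw [not_nonempty_iff] at hM
    intro F hF f hf
    exact ⟨IsometryEquiv.refl M, fun x => hM.elim (x : M)⟩
  intro F hF f hf
  obtain ⟨m, e, he⟩ := hF.fin_embedding
  obtain ⟨u, hu⟩ := TopologicalSpace.exists_dense_seq M
  have memF : ∀ i : Fin m, (e i : M) ∈ F := fun i => he ▸ Set.mem_range_self i
  set init : ℕ → M × M :=
    fun i => if h : i < m then (e ⟨i, h⟩, f ⟨e ⟨i, h⟩, memF _⟩) else (u 0, u 0) with hinit
  set P : ℕ → (ℕ → M × M) → Prop := fun n p =>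
    (∀ i ≤ n, dist (p n).2 (p i).2 = dist (p n).1 (p i).1) ∧
    (n < m → p n = init n) ∧
    (∀ k, n = m + 2 * k → (p n).1 = u k) ∧
    (∀ k, n = m + 2 * k + 1 → (p n).2 = u k) with hP
  have hPinv : ∀ n (p q : ℕ → M × M), (∀ i ≤ n, p i = q i) → P n p → P n q := by
    intro n p q hagree ⟨h1, h2, h3, h4⟩
    have hn := hagree n le_rfl
    exact ⟨fun i hi => by rw [← hn, ← hagree i hi]; exact h1 i hi,
      fun h => hn ▸ h2 h, fun k hk => hn ▸ h3 k hk, fun k hk => hn ▸ h4 k hk⟩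
  have hstep : ∀ n (p : ℕ → M × M), (∀ i < n, P i p) → ∃ x, P n (Function.update p n x) := by
    intro n p hprev
    have hiso : ∀ i j, i < n → j < n → dist (p i).2 (p j).2 = dist (p i).1 (p j).1 := by
      intro i j hi hj
      rcases le_total i j with h | h
      · rw [dist_comm, (hprev j hj).1 i h, dist_comm]
      · exact (hprev i hi).1 j h
    by_cases hn : n < m
    · refine ⟨init n, ?_, fun _ => Function.update_self _ _ _, fun k hk => by omega,
        fun k hk => by omega⟩
      intro i hi
      rcases Nat.lt_or_ge i n with h | h
      · rw [Function.update_self, Function.update_of_ne (by omega)]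
        rw [(hprev i h).2.1 (by omega)]
        simp only [hinit, dif_pos hn, dif_pos (show i < m by omega)]
        exact hf _ _
      · have : i = n := by omega
        subst this
        rw [Function.update_self]
        simp
    · push_neg at hn
      rcases Nat.even_or_odd (n - m) with ⟨k, hk⟩ | ⟨k, hk⟩
      · -- n = m + 2k : put u k on the left side
        have hnk : n = m + 2 * k := by omega
        obtain ⟨y, hy⟩ := ope n (fun i => (p i).1) (fun i => (p i).2) hiso (u k)
        refine ⟨(u k, y), ?_, fun h => by omega, fun k' hk' => by
            have : k' = k := by omega
            subst this; simp,
          fun k' hk' => by omega⟩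
        intro i hi
        rcases Nat.lt_or_ge i n with h | h
        · rw [Function.update_self, Function.update_of_ne (by omega)]
          exact hy i h
        · have : i = n := by omega
          subst this
          rw [Function.update_self]
          simp
      · -- n = m + 2k + 1 : put u k on the right side
        have hnk : n = m + 2 * k + 1 := by omega
        obtain ⟨y, hy⟩ := ope n (fun i => (p i).2) (fun i => (p i).1)
          (fun i j hi hj => (hiso i j hi hj).symm) (u k)
        refine ⟨(y, u k), ?_, fun h => by omega, fun k' hk' => by omega,
          fun k' hk' => by
            have : k' = k := by omega
            subst this; simp⟩
        intro i hi
        rcases Nat.lt_or_ge i n with h | h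
        · rw [Function.update_self, Function.update_of_ne (by omega)]
          exact (hy i h).symm
        · have : i = n := by omega
          subst this
          rw [Function.update_self]
          simp
  obtain ⟨q, hq⟩ := exists_seq_rec P hPinv hstep
  set A : ℕ → M := fun n => (q n).1 with hA
  set B : ℕ → M := fun n => (q n).2 with hB
  have hfull : ∀ i j, dist (B i) (B j) = dist (A i) (A j) := by
    intro i j
    rcases le_total i j with h | h
    · rw [dist_comm, (hq j).1 i h, dist_comm]
    · exact (hq i).1 j h
  have hAinit : ∀ (i : ℕ) (h : i < m), A i = e ⟨i, h⟩ ∧ B i = f ⟨e ⟨i, h⟩, memF _⟩ := by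
    intro i h
    have hqi := (hq i).2.1 h
    constructor
    · show (q i).1 = e ⟨i, h⟩
      rw [hqi, hinit]
      simp only [dif_pos h]
    · show (q i).2 = f ⟨e ⟨i, h⟩, memF _⟩
      rw [hqi, hinit]
      simp only [dif_pos h]
  have hAu : ∀ k, A (m + 2 * k) = u k := fun k => (hq _).2.2.1 k rfl
  have hBu : ∀ k, B (m + 2 * k + 1) = u k := fun k => (hq _).2.2.2 k rfl
  have hdenseA : DenseRange A :=
    Dense.mono (by rintro x ⟨k, rfl⟩; exact ⟨m + 2 * k, hAu k⟩) hu
  have hdenseB : DenseRange B :=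
    Dense.mono (by rintro x ⟨k, rfl⟩; exact ⟨m + 2 * k + 1, hBu k⟩) hu
  obtain ⟨T, hT1, hT2⟩ := isometry_extend A hdenseA B hfull
  obtain ⟨T', hT1', hT2'⟩ := isometry_extend B hdenseB A (fun i j => (hfull i j).symm)
  have hcT : Continuous T := (Isometry.of_dist_eq hT2).continuous
  have hcT' : Continuous T' := (Isometry.of_dist_eq hT2').continuous
  have hleft : ∀ z, T' (T z) = z := by
    have := hdenseA.equalizer (hcT'.comp hcT) continuous_id
      (funext fun n => by simp [Function.comp, hT1, hT1'])
    exact fun z => congrFun this z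
  have hright : ∀ z, T (T' z) = z := by
    have := hdenseB.equalizer (hcT.comp hcT') continuous_id
      (funext fun n => by simp [Function.comp, hT1, hT1'])
    exact fun z => congrFun this z
  refine ⟨⟨⟨T, T', hleft, hright⟩, Isometry.of_dist_eq hT2⟩, fun x => ?_⟩
  obtain ⟨i, hi⟩ : (x : M) ∈ Set.range e := he ▸ x.2
  have hAi : A (i : ℕ) = (x : M) := by
    rw [(hAinit i i.2).1, Fin.eta]
    exact hi
  have hTx : T ((x : M)) = f ⟨e ⟨(i : ℕ), i.2⟩, memF _⟩ := by
    rw [← hAi, hT1, (hAinit i i.2).2]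
  show T (x : M) = f x
  rw [hTx]
  congr 1
  exact Subtype.ext (by rw [Fin.eta]; exact hi)

lemma embed_of_type {M : Type*} [MetricSpace M] [CompleteSpace M]
    (hT : ∀ (F : Set M) (t : F → ℝ), IsRestrictedType M F t → ∃ p : M, Realizes F t p)
    (N : Type*) [MetricSpace N] [TopologicalSpace.SeparableSpace N]
    (hsub : distSet N ⊆ distSet M) :
    ∃ f : N → M, ∀ a b : N, dist (f a) (f b) = dist a b := by
  classical
  by_cases hN : Nonempty N
  swap
  · rw [not_nonempty_iff] at hN
    exact ⟨fun x => hN.elim x, fun a b => hN.elim a⟩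
  have hMne : Nonempty M := by
    obtain ⟨x⟩ := hN
    obtain ⟨p, q, -⟩ := hsub ⟨x, x, rfl⟩
    exact ⟨p⟩
  obtain ⟨v, hv⟩ := TopologicalSpace.exists_dense_seq N
  set P : ℕ → (ℕ → M) → Prop := fun n p => ∀ i ≤ n, dist (p n) (p i) = dist (v n) (v i)
    with hPdef
  have hPinv : ∀ n (p q : ℕ → M), (∀ i ≤ n, p i = q i) → P n p → P n q := by
    intro n p q hagree h i hi
    rw [← hagree n le_rfl, ← hagree i hi]
    exact h i hi
  have hstep : ∀ n (p : ℕ → M), (∀ i < n, P i p) → ∃ x, P n (Function.update p n x) := by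
    intro n p hprev
    have hiso : ∀ i j, i < n → j < n → dist (p i) (p j) = dist (v i) (v j) := by
      intro i j hi hj
      rcases le_total i j with h | h
      · rw [dist_comm, hprev j hj i h, dist_comm]
      · exact hprev i hi j h
    obtain ⟨y, hy⟩ := ext_type hT hsub n v p hiso (v n)
    refine ⟨y, fun i hi => ?_⟩
    rcases Nat.lt_or_ge i n with h | h
    · rw [Function.update_self, Function.update_of_ne (by omega)]
      exact hy i h
    · have : i = n := by omega
      subst this
      rw [Function.update_self]
      simp
  obtain ⟨b, hb⟩ := exists_seq_rec P hPinv hstep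
  have hfull : ∀ i j, dist (b i) (b j) = dist (v i) (v j) := by
    intro i j
    rcases le_total i j with h | h
    · rw [dist_comm, hb j i h, dist_comm]
    · exact hb i j h
  obtain ⟨f, -, hd⟩ := isometry_extend v hv b hfull
  exact ⟨f, hd⟩

/-- A complete separable metric space realizing all of its Katětov functions
is homogeneous; a complete separable metric space realizing all of its restricted type
functions is an Urysohn metric space. -/
theorem statement15 (M : Type) [MetricSpace M] [CompleteSpace M]
    [TopologicalSpace.SeparableSpace M] :
    ((∀ (F : Set M) (k : F → ℝ), IsKatetov M F k → ∃ p : M, Realizes F k p) →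
      IsHomogeneous M) ∧
    ((∀ (F : Set M) (t : F → ℝ), IsRestrictedType M F t → ∃ p : M, Realizes F t p) →
      IsUrysohn M) := by
  constructor
  · intro hK
    exact homog_of_ope (fun n a b hab x => ext_katetov hK n a b hab x)
  · intro hT
    have hK : ∀ (F : Set M) (k : F → ℝ), IsKatetov M F k → ∃ p : M, Realizes F k p := by
      intro F k hk
      obtain ⟨hfin, hpos, g, p, hg, hgp⟩ := hk
      refine hT F k ⟨hfin, hpos, fun x y => ⟨?_, ?_⟩, fun x => ⟨p, g x, hgp x⟩⟩
      · rw [← hgp x, ← hgp y, ← hg x y]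
        have := abs_dist_sub_le (g x) (g y) p
        simpa [dist_comm] using this
      · rw [← hgp x, ← hgp y, ← hg x y]
        have := dist_triangle (g x) p (g y)
        simpa [dist_comm] using this
    refine ⟨homog_of_ope (fun n a b hab x => ext_katetov hK n a b hab x),
      inferInstance, inferInstance, ?_⟩
    intro N _ _ hsub
    exact embed_of_type hT N hsub
end

section
/- Every separable, complete and universal metric space M is an Urysohn metric space; that is, every separable metric space N with dist(N) ⊆ dist(M) admits an isometric embedding into M. -/
section Aux
open Filter Topology

private lemma step_lemma {M N : Type} [MetricSpace M] [MetricSpace N]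
    (hhom : IsHomogeneous M)
    (huniv : ∀ (F : Type) [MetricSpace F] [Finite F], distSet F ⊆ distSet M →
      ∃ f : F → M, ∀ a b : F, dist (f a) (f b) = dist a b)
    (hdist : distSet N ⊆ distSet M) (x : ℕ → N) (n : ℕ) (v : ℕ → M)
    (hv : ∀ i j, i ≤ n → j ≤ n → dist (v i) (v j) = dist (x i) (x j)) :
    ∃ w : ℕ → M, (∀ i, i ≤ n → w i = v i) ∧
      ∀ i j, i ≤ n + 1 → j ≤ n + 1 → dist (w i) (w j) = dist (x i) (x j) := by
  classical
  set Fs : Set N := x '' Set.Iic (n+1) with hFs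
  haveI : Finite ↥Fs := ((Set.finite_Iic (n+1)).image x).to_subtype
  have hsub : distSet ↥Fs ⊆ distSet M := by
    intro r hr
    obtain ⟨a, b, hab⟩ := hr
    exact hdist ⟨a.1, b.1, by rw [← hab]; exact (Subtype.dist_eq a b).symm⟩
  obtain ⟨g, hg⟩ := huniv ↥Fs hsub
  have hmem : ∀ i, i ≤ n + 1 → x i ∈ Fs := fun i h => ⟨i, h, rfl⟩
  set gx : ℕ → M := fun i =>
    if h : i ≤ n + 1 then g ⟨x i, hmem i h⟩ else g ⟨x 0, hmem 0 (by omega)⟩ with hgx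
  have hgxd : ∀ i j, i ≤ n+1 → j ≤ n+1 → dist (gx i) (gx j) = dist (x i) (x j) := by
    intro i j hi hj
    simp only [hgx, dif_pos hi, dif_pos hj]
    rw [hg, Subtype.dist_eq]
  have hginj : ∀ i j, i ≤ n+1 → j ≤ n+1 → gx i = gx j → x i = x j := by
    intro i j hi hj hij
    have h := hgxd i j hi hj
    rw [hij, dist_self] at h
    exact dist_eq_zero.mp h.symm
  set F₀ : Set M := gx '' Set.Iic n with hF₀
  have hF₀fin : F₀.Finite := (Set.finite_Iic n).image gx
  set f₀ : ↥F₀ → M := fun p => v (Classical.choose p.2) with hf₀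
  have hspec : ∀ p : ↥F₀, Classical.choose p.2 ≤ n ∧ gx (Classical.choose p.2) = p.1 :=
    fun p => Classical.choose_spec p.2
  have hf₀iso : ∀ p q : ↥F₀, dist (f₀ p) (f₀ q) = dist (p : M) (q : M) := by
    intro p q
    obtain ⟨hi, hgi⟩ := hspec p
    obtain ⟨hj, hgj⟩ := hspec q
    show dist (v _) (v _) = _
    rw [hv _ _ hi hj, ← hgxd _ _ (by omega) (by omega), hgi, hgj]
  obtain ⟨φ, hφ⟩ := hhom F₀ hF₀fin f₀ hf₀iso
  have key : ∀ i, i ≤ n → φ (gx i) = v i := by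
    intro i hi
    have hmem' : gx i ∈ F₀ := ⟨i, hi, rfl⟩
    have h1 := hφ ⟨gx i, hmem'⟩
    rw [h1]
    obtain ⟨hj, hgj⟩ := hspec ⟨gx i, hmem'⟩
    show v _ = v i
    have hxx : x (Classical.choose hmem') = x i :=
      hginj _ _ (by omega) (by omega) hgj
    have h2 : dist (v (Classical.choose hmem')) (v i) = 0 := by
      rw [hv _ _ hj hi, hxx, dist_self]
    exact dist_eq_zero.mp h2
  refine ⟨fun i => if i ≤ n then v i else φ (gx i), fun i hi => if_pos hi, ?_⟩
  intro i j hi hj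
  have hw : ∀ i, i ≤ n + 1 → (if i ≤ n then v i else φ (gx i)) = φ (gx i) := by
    intro i hi
    by_cases h : i ≤ n
    · rw [if_pos h, key i h]
    · rw [if_neg h]
  simp only [hw i hi, hw j hj]
  rw [φ.dist_eq, hgxd i j hi hj]

end Aux

/-- Every separable, complete and universal metric space is an Urysohn metric
space. -/
theorem statement16 (M : Type) [MetricSpace M] [CompleteSpace M]
    [TopologicalSpace.SeparableSpace M] (hM : IsUniversal M) :
    IsUrysohn M := by
  classical
  obtain ⟨hhom, huniv⟩ := hM
  refine ⟨hhom, inferInstance, inferInstance, ?_⟩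
  intro N _ _ hdist
  by_cases hN : Nonempty N
  swap
  · rw [not_nonempty_iff] at hN
    exact ⟨fun a => (hN.false a).elim, fun a => (hN.false a).elim⟩
  have y₀ : N := hN.some
  obtain ⟨m₀, m₁, -⟩ := hdist ⟨y₀, y₀, dist_self y₀⟩
  obtain ⟨x, hx⟩ := TopologicalSpace.exists_dense_seq N
  have H : ∀ n (v : ℕ → M),
      (∀ i j, i ≤ n → j ≤ n → dist (v i) (v j) = dist (x i) (x j)) →
      ∃ w : ℕ → M, (∀ i, i ≤ n → w i = v i) ∧
        ∀ i j, i ≤ n + 1 → j ≤ n + 1 → dist (w i) (w j) = dist (x i) (x j) :=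
    fun n v hv => step_lemma hhom huniv hdist x n v hv
  choose W hW1 hW2 using H
  have base : ∀ i j, i ≤ 0 → j ≤ 0 →
      dist ((fun _ => m₀) i) ((fun _ => m₀) j) = dist (x i) (x j) := by
    intro i j hi hj
    rw [Nat.le_zero] at hi hj
    subst hi; subst hj
    simp
  let seq : ∀ n : ℕ, {v : ℕ → M //
      ∀ i j, i ≤ n → j ≤ n → dist (v i) (v j) = dist (x i) (x j)} :=
    fun n => Nat.rec ⟨fun _ => m₀, base⟩
      (fun k prev => ⟨W k prev.1 prev.2, hW2 k prev.1 prev.2⟩) n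
  have hcompat : ∀ n m, n ≤ m → ∀ i, i ≤ n → (seq m).1 i = (seq n).1 i := by
    intro n m hm
    induction m, hm using Nat.le_induction with
    | base => intro i _; rfl
    | succ m hm ih =>
      intro i hi
      have h1 : (seq (m+1)).1 = W m (seq m).1 (seq m).2 := rfl
      rw [h1, hW1 m (seq m).1 (seq m).2 i (le_trans hi hm), ih i hi]
  set u : ℕ → M := fun i => (seq i).1 i with hu_def
  have hu : ∀ i j, dist (u i) (u j) = dist (x i) (x j) := by
    intro i j
    have h1 : (seq (max i j)).1 i = u i := hcompat i (max i j) (le_max_left i j) i le_rfl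
    have h2 : (seq (max i j)).1 j = u j := hcompat j (max i j) (le_max_right i j) j le_rfl
    rw [← h1, ← h2]
    exact (seq (max i j)).2 i j (le_max_left _ _) (le_max_right _ _)
  rw [Metric.denseRange_iff] at hx
  have hk' : ∀ (y : N) (m : ℕ), ∃ j, dist y (x j) < 1 / (m + 1) :=
    fun y m => hx y (1 / (m + 1)) (by positivity)
  choose k hk using hk'
  have hxk : ∀ y : N, Filter.Tendsto (fun m => x (k y m)) Filter.atTop (nhds y) := by
    intro y
    rw [tendsto_iff_dist_tendsto_zero]
    refine squeeze_zero (fun m => dist_nonneg) (fun m => ?_)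
      tendsto_one_div_add_atTop_nhds_zero_nat
    rw [dist_comm]
    exact (hk y m).le
  have hcauchy : ∀ y : N, CauchySeq (fun m => u (k y m)) := by
    intro y
    have h1 : CauchySeq (fun m => x (k y m)) := (hxk y).cauchySeq
    rw [Metric.cauchySeq_iff] at h1 ⊢
    intro ε hε
    obtain ⟨Nn, hNn⟩ := h1 ε hε
    refine ⟨Nn, fun a ha b hb => ?_⟩
    rw [hu]
    exact hNn a ha b hb
  choose f hf using fun y => cauchySeq_tendsto_of_complete (hcauchy y)
  refine ⟨f, fun a b => ?_⟩
  have h1 : Filter.Tendsto (fun m => dist (u (k a m)) (u (k b m))) Filter.atTop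
      (nhds (dist (f a) (f b))) := (hf a).dist (hf b)
  have h2 : Filter.Tendsto (fun m => dist (u (k a m)) (u (k b m))) Filter.atTop
      (nhds (dist a b)) := by
    simp only [hu]
    exact (hxk a).dist (hxk b)
  exact tendsto_nhds_unique h1 h2
end

section
/- Every separable universal metric space M contains a countable dense subset S such that the subspace on S is universal, and every separable homogeneous metric space M contains a countable dense subset S such that the subspace on S is homogeneous. -/
/-!
Start from a countable dense set and close it off, in countably many rounds, under finitely
determined witnesses: for every finite set `B` already obtained, add the images of `B` under a
fixed global isometry extending each partial map on `B` (and under its inverse), and one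
isometric copy in `M` of each finite distance matrix with entries among the distances of `B`.
Each round adds countably many points, and the union is homogeneous because any finite partial
isometry of it, together with any further point, lies in a finite set seen at some round.
Universality is inherited the same way, as a finite space with distances realized in the union
has them realized in a finite subset of it.
-/

open Set

section FinitaryClosure

variable {α : Type*}

def finitaryClosureStage (W : Set α → Set α) (D : Set α) : ℕ → Set α
  | 0 => D
  | n + 1 => finitaryClosureStage W D n ∪
      ⋃ B ∈ {B : Set α | B.Finite ∧ B ⊆ finitaryClosureStage W D n}, W B

theorem Set.Countable.exists_countable_closure {D : Set α} (hD : D.Countable)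
    (W : Set α → Set α) (hW : ∀ B : Set α, B.Finite → (W B).Countable) :
    ∃ S, D ⊆ S ∧ S.Countable ∧ ∀ B ⊆ S, B.Finite → W B ⊆ S := by
  set T := finitaryClosureStage W D
  have hmono : Monotone T := monotone_nat_of_le_succ fun _ => subset_union_left
  have hcount : ∀ n, (T n).Countable := by
    intro n
    induction n with
    | zero => exact hD
    | succ n ih =>
      exact ih.union ((countable_ofPred_finite_subset ih).biUnion fun B hB => hW B hB.1)
  refine ⟨⋃ n, T n, subset_iUnion T 0, countable_iUnion hcount, fun B hBS hB => ?_⟩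
  obtain ⟨n, hn⟩ := hmono.directed_le.exists_mem_subset_of_finset_subset_biUnion
    (s := hB.toFinset) (by simpa using hBS)
  rw [hB.coe_toFinset] at hn
  have hBn : B ∈ {B : Set α | B.Finite ∧ B ⊆ T n} := ⟨hB, hn⟩
  exact (subset_biUnion_of_mem (u := W) hBn).trans
    (subset_union_right.trans (subset_iUnion T (n + 1)))

end FinitaryClosure

def IsometryEquiv.subtypeEquiv {α β : Type*} [PseudoMetricSpace α] [PseudoMetricSpace β]
    {p : α → Prop} {q : β → Prop} (g : α ≃ᵢ β) (h : ∀ a, p a ↔ q (g a)) :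
    {a // p a} ≃ᵢ {b // q b} where
  toEquiv := g.toEquiv.subtypeEquiv h
  isometry_toFun := Isometry.of_dist_eq fun a b => g.isometry.dist_eq a b

section Witnesses

variable {M : Type*} [MetricSpace M]

theorem IsHomogeneous.exists_isometryEquiv_extend (hM : IsHomogeneous M) {ι : Type*} [Finite ι]
    {u v : ι → M} (h : ∀ i j, dist (v i) (v j) = dist (u i) (u j)) :
    ∃ g : M ≃ᵢ M, ∀ i, g (u i) = v i := by
  choose σ hσ using fun y : range u => y.2
  obtain ⟨g, hg⟩ := hM (range u) (finite_range u) (fun y => v (σ y)) fun y z => by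
    rw [h, hσ, hσ]
  refine ⟨g, fun i => ?_⟩
  rw [hg ⟨u i, mem_range_self i⟩]
  exact dist_eq_zero.1 (by rw [h, hσ, dist_self])

open Classical in
/-- `s` is read as the graph of a partial map of `M`. -/
noncomputable def extensionOf (s : Set (M × M)) : M ≃ᵢ M :=
  if h : ∃ g : M ≃ᵢ M, ∀ p ∈ s, g p.1 = p.2 then h.choose else IsometryEquiv.refl M

theorem extensionOf_spec {s : Set (M × M)} (h : ∃ g : M ≃ᵢ M, ∀ p ∈ s, g p.1 = p.2) :
    ∀ p ∈ s, extensionOf s p.1 = p.2 := by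
  rw [extensionOf, dif_pos h]
  exact h.choose_spec

open Classical in
noncomputable def embeddingOf {n : ℕ} (d : Fin n → Fin n → ℝ) : Set M :=
  if h : ∃ f : Fin n → M, ∀ i j, dist (f i) (f j) = d i j then range h.choose else ∅

theorem embeddingOf_finite {n : ℕ} (d : Fin n → Fin n → ℝ) :
    (embeddingOf d : Set M).Finite := by
  unfold embeddingOf
  split_ifs
  exacts [finite_range _, finite_empty]

theorem exists_realization_mem_embeddingOf {n : ℕ} {d : Fin n → Fin n → ℝ}
    (h : ∃ f : Fin n → M, ∀ i j, dist (f i) (f j) = d i j) :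
    ∃ f : Fin n → M, (∀ i j, dist (f i) (f j) = d i j) ∧ ∀ i, f i ∈ embeddingOf d := by
  refine ⟨h.choose, h.choose_spec, fun i => ?_⟩
  rw [embeddingOf, dif_pos h]
  exact mem_range_self i

def homogeneityWitnesses (B : Set M) : Set M :=
  ⋃ s ∈ 𝒫 (B ×ˢ B), extensionOf s '' B ∪ (extensionOf s).symm '' B

/-- An entry `d i j` of the matrix names a pair of points of `B` whose distance is used. -/
def universalityWitnesses (B : Set M) : Set M :=
  ⋃ (n : ℕ) (d : Fin n → Fin n → B × B),
    embeddingOf fun i j => dist ((d i j).1 : M) (d i j).2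

theorem homogeneityWitnesses_finite {B : Set M} (hB : B.Finite) :
    (homogeneityWitnesses B).Finite :=
  (hB.prod hB).powerset.biUnion fun _ _ => (hB.image _).union (hB.image _)

theorem universalityWitnesses_countable {B : Set M} (hB : B.Finite) :
    (universalityWitnesses B).Countable := by
  have := hB.to_subtype
  exact countable_iUnion fun _ => countable_iUnion fun _ => (embeddingOf_finite _).countable

end Witnesses

section ClosedSubsets

variable {M : Type*} [MetricSpace M] {S : Set M}

theorem extensionOf_mem_and_symm_mem (hS : ∀ B ⊆ S, B.Finite → homogeneityWitnesses B ⊆ S)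
    {s : Set (M × M)} (hs : s.Finite) (hsS : s ⊆ S ×ˢ S) {x : M} (hx : x ∈ S) :
    extensionOf s x ∈ S ∧ (extensionOf s).symm x ∈ S := by
  set B := insert x (Prod.fst '' s ∪ Prod.snd '' s)
  have hBS : B ⊆ S := insert_subset hx <|
    union_subset (image_subset_iff.2 fun p hp => (hsS hp).1)
      (image_subset_iff.2 fun p hp => (hsS hp).2)
  have hsB : s ∈ 𝒫 (B ×ˢ B) := fun p hp =>
    ⟨Or.inr (Or.inl ⟨p, hp, rfl⟩), Or.inr (Or.inr ⟨p, hp, rfl⟩)⟩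
  have hW := hS B hBS (((hs.image _).union (hs.image _)).insert x)
  exact ⟨hW (mem_biUnion hsB (Or.inl ⟨x, mem_insert x _, rfl⟩)),
    hW (mem_biUnion hsB (Or.inr ⟨x, mem_insert x _, rfl⟩))⟩

theorem isHomogeneous_of_homogeneityWitnesses_subset (hM : IsHomogeneous M)
    (hS : ∀ B ⊆ S, B.Finite → homogeneityWitnesses B ⊆ S) : IsHomogeneous S := by
  intro F hF f hf
  have := hF.to_subtype
  set s : Set (M × M) := range fun x : F => (((x : S) : M), ((f x : S) : M))
  have hext : ∃ g : M ≃ᵢ M, ∀ p ∈ s, g p.1 = p.2 := by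
    obtain ⟨g, hg⟩ := hM.exists_isometryEquiv_extend (u := fun x : F => ((x : S) : M))
      (v := fun x => ((f x : S) : M)) hf
    exact ⟨g, by rintro _ ⟨x, rfl⟩; exact hg x⟩
  have hsS : s ⊆ S ×ˢ S := by
    rintro _ ⟨x, rfl⟩
    exact ⟨(x : S).2, (f x).2⟩
  have hmem := fun {x} => extensionOf_mem_and_symm_mem hS (finite_range _) hsS (x := x)
  have hpres : ∀ x, x ∈ S ↔ extensionOf s x ∈ S := fun x =>
    ⟨fun hx => (hmem hx).1, fun hx => (extensionOf s).symm_apply_apply x ▸ (hmem hx).2⟩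
  exact ⟨(extensionOf s).subtypeEquiv hpres,
    fun x => Subtype.ext (extensionOf_spec hext _ ⟨x, rfl⟩)⟩

theorem distSet_subtype_subset : distSet S ⊆ distSet M := by
  rintro r ⟨x, y, rfl⟩
  exact ⟨x, y, rfl⟩

theorem exists_isometric_embedding_of_universalityWitnesses_subset
    (hM : ∀ (F : Type) [MetricSpace F] [Finite F], distSet F ⊆ distSet M →
      ∃ f : F → M, ∀ a b : F, dist (f a) (f b) = dist a b)
    (hS : ∀ B ⊆ S, B.Finite → universalityWitnesses B ⊆ S)
    (F : Type) [MetricSpace F] [Finite F] (hF : distSet F ⊆ distSet S) :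
    ∃ f : F → S, ∀ a b : F, dist (f a) (f b) = dist a b := by
  set e := Finite.equivFin F
  choose x y hxy using fun i j => hF ⟨e.symm i, e.symm j, rfl⟩
  set B : Set M := (range fun p : Fin _ × Fin _ => (x p.1 p.2 : M)) ∪
    range fun p : Fin _ × Fin _ => (y p.1 p.2 : M)
  have hBS : B ⊆ S := union_subset (range_subset_iff.2 fun _ => Subtype.prop _)
    (range_subset_iff.2 fun _ => Subtype.prop _)
  let d i j : B × B :=
    (⟨x i j, Or.inl ⟨(i, j), rfl⟩⟩, ⟨y i j, Or.inr ⟨(i, j), rfl⟩⟩)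
  obtain ⟨f₀, hf₀⟩ := hM F (hF.trans distSet_subtype_subset)
  obtain ⟨f, hf, hfd⟩ := exists_realization_mem_embeddingOf (M := M)
    (d := fun i j => dist ((d i j).1 : M) (d i j).2)
    ⟨fun i => f₀ (e.symm i), fun i j => (hf₀ _ _).trans (hxy i j).symm⟩
  have hfS : ∀ i, f i ∈ S := fun i =>
    hS B hBS ((finite_range _).union (finite_range _)) (mem_iUnion₂.2 ⟨_, d, hfd i⟩)
  refine ⟨fun a => ⟨f (e a), hfS _⟩, fun a b => ?_⟩
  exact (hf (e a) (e b)).trans <| (hxy _ _).trans <| by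
    rw [e.symm_apply_apply, e.symm_apply_apply]

end ClosedSubsets

/-- Every separable universal metric space contains a countable dense universal
subspace, and every separable homogeneous metric space contains a countable dense homogeneous
subspace. -/
theorem statement17 (M : Type) [MetricSpace M] [TopologicalSpace.SeparableSpace M] :
    (IsUniversal M → ∃ S : Set M, S.Countable ∧ Dense S ∧ IsUniversal S) ∧
    (IsHomogeneous M → ∃ S : Set M, S.Countable ∧ Dense S ∧ IsHomogeneous S) := by
  obtain ⟨D, hDc, hDd⟩ := TopologicalSpace.exists_countable_dense M
  obtain ⟨S, hDS, hSc, hSW⟩ := hDc.exists_countable_closure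
    (fun B => homogeneityWitnesses B ∪ universalityWitnesses B) fun B hB =>
      (homogeneityWitnesses_finite hB).countable.union (universalityWitnesses_countable hB)
  have hSd : Dense S := hDd.mono hDS
  have hShom : ∀ B ⊆ S, B.Finite → homogeneityWitnesses B ⊆ S := fun B hB hBf =>
    subset_union_left.trans (hSW B hB hBf)
  have hSuniv : ∀ B ⊆ S, B.Finite → universalityWitnesses B ⊆ S := fun B hB hBf =>
    subset_union_right.trans (hSW B hB hBf)
  exact ⟨fun hU => ⟨S, hSc, hSd, isHomogeneous_of_homogeneityWitnesses_subset hU.1 hShom,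
      exists_isometric_embedding_of_universalityWitnesses_subset hU.2 hSuniv⟩,
    fun hH => ⟨S, hSc, hSd, isHomogeneous_of_homogeneityWitnesses_subset hH hShom⟩⟩
end

section
/- Let R ⊆ [0,∞) satisfy the 4-values condition. Then for every countable subset T of R there exists a countable set C with T ⊆ C ⊆ R such that C is dense in R and C satisfies the 4-values condition. -/
/-- If `R ⊆ [0,∞)` satisfies the 4-values condition, then every countable
subset `T` of `R` extends to a countable dense subset `C` of `R` satisfying the 4-values
condition. -/
theorem statement18 (R : Set ℝ) (hR : R ⊆ Set.Ici 0) (h4 : FourValues R)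
    (T : Set ℝ) (hT : T ⊆ R) (hTc : T.Countable) :
    ∃ C : Set ℝ, T ⊆ C ∧ C ⊆ R ∧ C.Countable ∧ R ⊆ closure C ∧ FourValues C := by
  obtain ⟨D, hDR, hDc, hDd⟩ :=
    (TopologicalSpace.IsSeparable.of_separableSpace R).exists_countable_dense_subset
  -- predicate on quadruples
  set P : ℝ × ℝ × ℝ × ℝ → Prop := fun q => ∃ y ∈ R, Leads y q.1 q.2.2.2 q.2.2.1 q.2.1 with hP
  classical
  let f : ℝ × ℝ × ℝ × ℝ → ℝ := fun q => if h : P q then h.choose else 0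
  have hf : ∀ q, P q → f q ∈ R ∧ Leads (f q) q.1 q.2.2.2 q.2.2.1 q.2.1 := by
    intro q hq
    simp only [f, dif_pos hq]
    exact ⟨hq.choose_spec.1, hq.choose_spec.2⟩
  -- iterative construction
  let step : Set ℝ → Set ℝ := fun S => S ∪ f '' {q ∈ S ×ˢ S ×ˢ S ×ˢ S | P q}
  let Cn : ℕ → Set ℝ := fun n => step^[n] (T ∪ D)
  have hstep_sub : ∀ S, S ⊆ step S := fun S => Set.subset_union_left
  have hstepR : ∀ S, S ⊆ R → step S ⊆ R := by
    rintro S hS x (hx | ⟨q, ⟨_, hq⟩, rfl⟩)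
    · exact hS hx
    · exact (hf q hq).1
  have hstepC : ∀ S : Set ℝ, S.Countable → (step S).Countable := by
    intro S hS
    exact hS.union ((((hS.prod (hS.prod (hS.prod hS))).mono
      (Set.sep_subset _ _)).image f))
  have hCn_succ : ∀ n, Cn (n + 1) = step (Cn n) := by
    intro n; simp only [Cn, Function.iterate_succ_apply']
  have hCnR : ∀ n, Cn n ⊆ R := by
    intro n; induction n with
    | zero => exact Set.union_subset hT hDR
    | succ n ih => rw [hCn_succ]; exact hstepR _ ih
  have hCnC : ∀ n, (Cn n).Countable := by
    intro n; induction n with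
    | zero => exact hTc.union hDc
    | succ n ih => rw [hCn_succ]; exact hstepC _ ih
  have hmono : Monotone Cn := by
    apply monotone_nat_of_le_succ
    intro n; rw [hCn_succ]; exact hstep_sub _
  refine ⟨⋃ n, Cn n, ?_, ?_, ?_, ?_, ?_⟩
  · exact (Set.subset_union_left).trans (Set.subset_iUnion Cn 0)
  · exact Set.iUnion_subset hCnR
  · exact Set.countable_iUnion hCnC
  · exact hDd.trans (closure_mono ((Set.subset_union_right).trans (Set.subset_iUnion Cn 0)))
  · intro a b c d ha hb hc hd ⟨x, hx, hxl⟩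
    obtain ⟨na, hna⟩ := Set.mem_iUnion.1 ha
    obtain ⟨nb, hnb⟩ := Set.mem_iUnion.1 hb
    obtain ⟨nc, hnc⟩ := Set.mem_iUnion.1 hc
    obtain ⟨nd, hnd⟩ := Set.mem_iUnion.1 hd
    set N := max (max na nb) (max nc nd) with hN
    have haN : a ∈ Cn N := hmono (le_max_of_le_left (le_max_left _ _)) hna
    have hbN : b ∈ Cn N := hmono (le_max_of_le_left (le_max_right _ _)) hnb
    have hcN : c ∈ Cn N := hmono (le_max_of_le_right (le_max_left _ _)) hnc
    have hdN : d ∈ Cn N := hmono (le_max_of_le_right (le_max_right _ _)) hnd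
    have hxR : x ∈ R := Set.iUnion_subset hCnR hx
    have hPq : P (a, b, c, d) := h4 a b c d (hCnR _ haN) (hCnR _ hbN) (hCnR _ hcN)
      (hCnR _ hdN) ⟨x, hxR, hxl⟩
    refine ⟨f (a, b, c, d), ?_, (hf _ hPq).2⟩
    apply Set.mem_iUnion.2 ⟨N + 1, ?_⟩
    rw [hCn_succ]
    exact Or.inr ⟨(a, b, c, d), ⟨⟨haN, hbN, hcN, hdN⟩, hPq⟩, rfl⟩
end

section
/- Let U be an Urysohn metric space such that 0 is a limit point of dist(U). Then dist(U) is a closed subset of ℝ. -/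
/-!
If `r > 0` is a limit of distances, choose distances `ρ n → r` and small distances `σ n` with
`σ` summable such that `(ρ n, ρ (n+1), σ n)` is a metric triangle; this is possible because `0`
is a limit of distances. Fix `u` and a point `y₀` at distance `ρ 0` from `u`. Universality
realizes each triangle somewhere in `U`, and homogeneity moves it onto the current pair
`(u, yₙ)`, giving `yₙ₊₁` with `dist u yₙ₊₁ = ρ (n+1)` and `dist yₙ yₙ₊₁ = σ n`. The sequence
`(yₙ)` is Cauchy, and its limit is at distance `r` from `u`.
-/

open Filter Topology

theorem distSet_subset_Ici (X : Type*) [MetricSpace X] : distSet X ⊆ Set.Ici 0 := by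
  rintro _ ⟨x, y, rfl⟩
  exact dist_nonneg

theorem IsUrysohn.isUniversal {X : Type*} [MetricSpace X] (hX : IsUrysohn X) :
    IsUniversal X :=
  ⟨hX.1, fun F _ _ hF => hX.2.2.2 F hF⟩

theorem IsHomogeneous.exists_isometryEquiv_map_pair {X : Type*} [MetricSpace X]
    (hX : IsHomogeneous X) {p q u v : X} (h : dist u v = dist p q) :
    ∃ g : X ≃ᵢ X, g p = u ∧ g q = v := by
  classical
  have hmem : ∀ x : ({p, q} : Set X), (x : X) = p ∨ (x : X) = q := fun x => x.2
  let f : ({p, q} : Set X) → X := fun x => if (x : X) = p then u else v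
  have hf : ∀ x y, dist (f x) (f y) = dist (x : X) (y : X) := by
    intro x y
    rcases hmem x with hx | hx <;> rcases hmem y with hy | hy <;>
      by_cases hpq : q = p <;> simp_all [f, dist_comm]
  obtain ⟨g, hg⟩ := hX _ ((Set.finite_singleton q).insert p) f hf
  refine ⟨g, by simpa [f] using hg ⟨p, by simp⟩, ?_⟩
  by_cases hpq : q = p
  · subst hpq
    have huv : u = v := dist_eq_zero.mp (by simpa using h)
    simpa [f, huv] using hg ⟨q, by simp⟩
  · simpa [f, hpq] using hg ⟨q, by simp⟩

inductive TriVertex : Type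
  | A | B | C
  deriving DecidableEq

namespace TriVertex

instance : Fintype TriVertex :=
  ⟨{A, B, C}, fun x => by cases x <;> simp⟩

def dist (a b c : ℝ) : TriVertex → TriVertex → ℝ
  | A, A | B, B | C, C => 0
  | A, B | B, A => a
  | A, C | C, A => b
  | B, C | C, B => c

abbrev metricSpace {a b c : ℝ} (ha : 0 < a) (hb : 0 < b) (hc : 0 < c)
    (h : MetricTriple a b c) : MetricSpace TriVertex where
  dist := dist a b c
  dist_self x := by cases x <;> rfl
  dist_comm x y := by cases x <;> cases y <;> rfl
  dist_triangle x y z := by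
    obtain ⟨h₁, h₂⟩ := h
    rw [abs_sub_le_iff] at h₁
    cases x <;> cases y <;> cases z <;> simp only [dist] <;> linarith
  eq_of_dist_eq_zero {x y} hxy := by
    cases x <;> cases y <;> first | rfl | (simp only [dist] at hxy; linarith)

end TriVertex

theorem IsUniversal.exists_dist_eq_dist_eq {X : Type*} [MetricSpace X] (hX : IsUniversal X)
    {a b c : ℝ} (ha : 0 < a) (hb : 0 < b) (hc : 0 < c) (haX : a ∈ distSet X)
    (hbX : b ∈ distSet X) (hcX : c ∈ distSet X) (h : MetricTriple a b c) {u v : X}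
    (huv : dist u v = a) : ∃ w, dist u w = b ∧ dist v w = c := by
  let := TriVertex.metricSpace ha hb hc h
  have hsub : distSet TriVertex ⊆ distSet X := by
    rintro _ ⟨x, y, rfl⟩
    cases x <;> cases y
    all_goals first | exact ⟨u, u, dist_self u⟩ | assumption
  obtain ⟨f, hf⟩ := hX.2 TriVertex hsub
  obtain ⟨g, hgA, hgB⟩ := hX.1.exists_isometryEquiv_map_pair
    (p := f .A) (q := f .B) (huv.trans (hf .A .B).symm)
  exact ⟨g (f .C), by rw [← hgA, g.dist_eq, hf]; rfl, by rw [← hgB, g.dist_eq, hf]; rfl⟩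

theorem ZeroLimit.exists_metricTriple_chain {R : Set ℝ} (hR : ZeroLimit R) {r : ℝ}
    (hr : r ∈ closure R) (hr₀ : 0 < r) :
    ∃ ρ σ : ℕ → ℝ, (∀ n, ρ n ∈ R) ∧ (∀ n, σ n ∈ R) ∧ (∀ n, 0 < ρ n) ∧ (∀ n, 0 < σ n) ∧
      (∀ n, MetricTriple (ρ n) (ρ (n + 1)) (σ n)) ∧ Summable σ ∧ Tendsto ρ atTop (𝓝 r) := by
  choose s hsR hs₀ hs using fun n : ℕ => hR _ (lt_min (pow_pos one_half_pos n) hr₀)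
  have hs_geom (n : ℕ) : s n < (1 / 2) ^ n := (hs n).trans_le (min_le_left _ _)
  have hs_r (n : ℕ) : s n < r := (hs n).trans_le (min_le_right _ _)
  choose ρ hρR hρ using fun n =>
    Metric.mem_closure_iff.mp hr (min (s n) (s (n + 1)) / 2) (half_pos (lt_min (hs₀ n) (hs₀ (n + 1))))
  have hρ_near (n : ℕ) : |r - ρ n| < s n / 2 ∧ |r - ρ n| < s (n + 1) / 2 := by
    have := hρ n
    rw [Real.dist_eq] at this
    constructor <;> linarith [min_le_left (s n) (s (n + 1)), min_le_right (s n) (s (n + 1))]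
  -- The triangle `(ρ n, ρ (n+1), σ n)` uses the step `σ n = s (n+1)`, since `ρ n` and
  -- `ρ (n+1)` are both within `s (n+1) / 2` of `r`.
  refine ⟨ρ, fun n => s (n + 1), hρR, fun n => hsR _, fun n => ?_, fun n => hs₀ _, fun n => ?_,
    (summable_nat_add_iff 1).mpr ?_, ?_⟩
  · have := (abs_lt.mp (hρ_near n).1).2
    linarith [hs_r n]
  · have h₁ := abs_lt.mp (hρ_near n).2
    have h₂ := abs_lt.mp (hρ_near (n + 1)).1
    refine ⟨abs_sub_le_iff.mpr ⟨by linarith, by linarith⟩, ?_⟩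
    linarith [hs_r (n + 1)]
  · exact summable_geometric_two.of_nonneg_of_le (fun n => (hs₀ n).le) fun n => (hs_geom n).le
  · refine tendsto_iff_dist_tendsto_zero.mpr (squeeze_zero (fun _ => dist_nonneg) (fun n => ?_)
      (tendsto_pow_atTop_nhds_zero_of_lt_one (by norm_num) (by norm_num : (1 / 2 : ℝ) < 1)))
    rw [Real.dist_eq, abs_sub_comm]
    linarith [(hρ_near n).1, hs_geom n, pow_pos (one_half_pos (α := ℝ)) n]

theorem exists_dist_eq_of_tendsto {X : Type*} [PseudoMetricSpace X] [CompleteSpace X] (u : X)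
    {ρ σ : ℕ → ℝ} {r : ℝ} (hρ : Tendsto ρ atTop (𝓝 r)) (hσ : Summable σ)
    (h₀ : ∃ y, dist u y = ρ 0)
    (hstep : ∀ n y, dist u y = ρ n → ∃ y', dist u y' = ρ (n + 1) ∧ dist y y' ≤ σ n) :
    ∃ p, dist u p = r := by
  obtain ⟨y₀, hy₀⟩ := h₀
  choose! next hnext_dist hnext_step using hstep
  let y : ℕ → X := fun n => Nat.rec (motive := fun _ => X) y₀ next n
  have hy (n : ℕ) : dist u (y n) = ρ n := by
    induction n with
    | zero => exact hy₀
    | succ n ih => exact hnext_dist n _ ih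
  obtain ⟨p, hp⟩ := cauchySeq_tendsto_of_complete
    (cauchySeq_of_dist_le_of_summable σ (fun n => hnext_step n _ (hy n)) hσ)
  refine ⟨p, tendsto_nhds_unique ?_ hρ⟩
  simpa only [hy] using (tendsto_const_nhds (x := u)).dist hp

/-- If `U` is an Urysohn metric space and `0` is a limit point of its distance
set, then its distance set is a closed subset of `ℝ`. -/
theorem statement19 (U : Type) [MetricSpace U] (hU : IsUrysohn U)
    (hlim : ZeroLimit (distSet U)) :
    IsClosed (distSet U) := by
  have : CompleteSpace U := hU.2.2.1
  refine isClosed_of_closure_subset fun r hr => ?_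
  obtain hr₀ | hr₀ := (show 0 ≤ r from closure_minimal (distSet_subset_Ici U) isClosed_Ici hr).eq_or_lt
  · obtain ⟨_, ⟨x, -, -⟩, -⟩ := hlim 1 one_pos
    exact ⟨x, x, (dist_self x).trans hr₀⟩
  obtain ⟨ρ, σ, hρU, hσU, hρ₀, hσ₀, htri, hσ, hρ⟩ := hlim.exists_metricTriple_chain hr hr₀
  obtain ⟨u, y₀, hy₀⟩ := hρU 0
  obtain ⟨p, hp⟩ := exists_dist_eq_of_tendsto u hρ hσ ⟨y₀, hy₀⟩ fun n _ hy =>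
    (hU.isUniversal.exists_dist_eq_dist_eq (hρ₀ n) (hρ₀ (n + 1)) (hσ₀ n) (hρU n) (hρU (n + 1))
      (hσU n) (htri n) hy).imp fun _ h => ⟨h.1, h.2.le⟩
  exact ⟨u, p, hp⟩
end
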